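/- Let G be a topological group. The map Φ̃ : G² × G² → G⁴ defined by Φ̃(k, ν) = F̃_ν(ĩ(k)) is a homeomorphism satisfying π̃₁ ∘ Φ̃ = pr₁ (projection onto the first factor). Hence the gauge-invariant triple (G⁴, π̃₁, G²) is a trivial principal G²-fiber bundle with global section ĩ. -/

import Mathlib

/-- The induced refining map `ĩ : G² → G⁴`, `ĩ(k₁,k₂) = (k₁,1,1,k₂)`. -/
def refiningTil {G : Type*} [Group G] : G × G → G × G × G × G :=
  fun (k₁, k₂) => (k₁, 1, 1, k₂)

/-- The gauge-invariant coarse graining map `π̃₁ : G⁴ → G²`. -/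
def coarseTil₁ {G : Type*} [Group G] : G × G × G × G → G × G :=
  fun (h₁, h₂, h₃, h₄) => (h₁, h₄ * h₃ * h₂)

/-- The gauge-invariant family of maps `F̃_ν : G⁴ → G⁴` for `ν = (ν₁,ν₂) ∈ G²`. -/
def Ftil {G : Type*} [Group G] :
    G × G → (G × G × G × G) → G × G × G × G :=
  fun (ν₁, ν₂) (h₁, h₂, h₃, h₄) => (h₁, ν₁ * h₂, ν₂ * h₃ * ν₁⁻¹, h₄ * ν₂⁻¹)

/-! The coarse-graining map is invariant under every `F̃_ν` and `ĩ` is a section of it; the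
trivialisation `Φ̃(k, ν) = (k₁, ν₁, ν₂ ν₁⁻¹, k₂ ν₂⁻¹)` is inverted by
`h ↦ (π̃₁ h, (h₂, h₃ h₂))`, both maps being built from multiplication and inversion. -/

section Algebra

variable {G : Type*} [Group G]

theorem coarseTil₁_Ftil (ν : G × G) (h : G × G × G × G) :
    coarseTil₁ (Ftil ν h) = coarseTil₁ h := by
  obtain ⟨ν₁, ν₂⟩ := ν
  obtain ⟨h₁, h₂, h₃, h₄⟩ := h
  simp [coarseTil₁, Ftil, mul_assoc]

theorem coarseTil₁_refiningTil (k : G × G) : coarseTil₁ (refiningTil k) = k := by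
  obtain ⟨k₁, k₂⟩ := k
  simp [coarseTil₁, refiningTil]

theorem Ftil_refiningTil (ν k : G × G) :
    Ftil ν (refiningTil k) = (k.1, ν.1, ν.2 * ν.1⁻¹, k.2 * ν.2⁻¹) := by
  obtain ⟨ν₁, ν₂⟩ := ν
  obtain ⟨k₁, k₂⟩ := k
  simp [Ftil, refiningTil]

end Algebra

section Topology

variable (G : Type*) [Group G] [TopologicalSpace G] [IsTopologicalGroup G]

def gaugeTrivialization : ((G × G) × (G × G)) ≃ₜ (G × G × G × G) where
  toFun p := (p.1.1, p.2.1, p.2.2 * p.2.1⁻¹, p.1.2 * p.2.2⁻¹)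
  invFun h := ((h.1, h.2.2.2 * h.2.2.1 * h.2.1), (h.2.1, h.2.2.1 * h.2.1))
  left_inv := by
    rintro ⟨⟨k₁, k₂⟩, ν₁, ν₂⟩
    simp
  right_inv := by
    rintro ⟨h₁, h₂, h₃, h₄⟩
    simp [mul_assoc]
  continuous_toFun := by fun_prop
  continuous_invFun := by fun_prop

theorem gaugeTrivialization_apply (p : (G × G) × (G × G)) :
    gaugeTrivialization G p = Ftil p.2 (refiningTil p.1) :=
  (Ftil_refiningTil p.2 p.1).symm

end Topology

/-- For a topological group `G`, the map `Φ̃ : G² × G² → G⁴`,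
`Φ̃(k, ν) = F̃_ν(ĩ(k))`, is a homeomorphism satisfying `π̃₁ ∘ Φ̃ = pr₁`.
Hence the gauge-invariant triple `(G⁴, π̃₁, G²)` is a trivial principal
`G²`-fiber bundle with global section `ĩ`. -/
theorem trivial_bundle_structure_gauge_invariant {G : Type*} [Group G]
    [TopologicalSpace G] [IsTopologicalGroup G] :
    ∃ Φ : ((G × G) × (G × G)) ≃ₜ (G × G × G × G),
      (∀ p : (G × G) × (G × G), Φ p = Ftil p.2 (refiningTil p.1)) ∧
      ∀ p : (G × G) × (G × G), coarseTil₁ (Φ p) = p.1 := by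
  refine ⟨gaugeTrivialization G, gaugeTrivialization_apply G, fun p => ?_⟩
  rw [gaugeTrivialization_apply, coarseTil₁_Ftil, coarseTil₁_refiningTil]
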